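/- If the solution set T⁻¹(0) = {z : 0 ∈ T(z)} is nonempty and d₀ denotes the distance from z₀ to T⁻¹(0), then for every k ≥ 1 the ergodic error satisfies ε_k^a ≤ 2d₀²/(Λ_k √(1-σ²)). -/
import Mathlib


open scoped RealInnerProductSpace

/-- One-step estimate of the (r-)HPE method, for an arbitrary comparison point `w`. -/
lemma hpe_step {H : Type*} [NormedAddCommGroup H] [InnerProductSpace ℝ H]
    (zp zt vv w : H) (lm tt ep σ : ℝ) (hl : 0 < lm) (ht0 : 0 < tt) (ht1 : tt ≤ 1)
    (hσ : σ ^ 2 ≤ 1)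
    (herr : ‖lm • vv + zt - zp‖ ^ 2 + 2 * lm * ep ≤ σ ^ 2 * ‖zt - zp‖ ^ 2) :
    2 * (tt * lm) * (⟪vv, zt - w⟫ + ep) ≤ ‖zp - w‖ ^ 2 - ‖zp - (tt * lm) • vv - w‖ ^ 2 := by
  have e1 : ‖lm • vv + zt - zp‖ ^ 2
      = lm ^ 2 * ‖vv‖ ^ 2 + 2 * (lm * ⟪vv, zt - zp⟫) + ‖zt - zp‖ ^ 2 := by
    rw [add_sub_assoc, norm_add_sq_real, real_inner_smul_left, norm_smul]
    simp [Real.norm_eq_abs, mul_pow, sq_abs]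
  have e2 : ‖zp - (tt * lm) • vv - w‖ ^ 2
      = ‖zp - w‖ ^ 2 - 2 * ((tt * lm) * ⟪vv, zp - w⟫) + (tt * lm) ^ 2 * ‖vv‖ ^ 2 := by
    have h0 : zp - (tt * lm) • vv - w = (zp - w) - (tt * lm) • vv := by abel
    rw [h0, norm_sub_sq_real, real_inner_smul_right, norm_smul, real_inner_comm]
    rw [mul_pow, Real.norm_eq_abs, sq_abs]
  have e3 : ⟪vv, zt - w⟫ = ⟪vv, zt - zp⟫ + ⟪vv, zp - w⟫ := by
    rw [← inner_add_right, sub_add_sub_cancel]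
  have hv : (0:ℝ) ≤ ‖vv‖ ^ 2 := by positivity
  have hu : (0:ℝ) ≤ ‖zt - zp‖ ^ 2 := by positivity
  rw [e2, e3]
  nlinarith [mul_le_mul_of_nonneg_left herr ht0.le,
    mul_nonneg (mul_nonneg ht0.le (sub_nonneg.2 ht1)) (mul_nonneg (mul_nonneg hl.le hl.le) hv),
    mul_nonneg ht0.le (mul_nonneg (sub_nonneg.2 hσ) hu)]

set_option maxHeartbeats 1000000 in
lemma hpe_tilde {H : Type*} [NormedAddCommGroup H] [InnerProductSpace ℝ H]
    (zp zt vv zs : H) (lm ep σ : ℝ) (hl : 0 < lm) (he : 0 ≤ ep)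
    (hσ0 : 0 ≤ σ) (hσ1 : σ < 1)
    (henl : ⟪zt - zs, vv⟫ ≥ -ep)
    (herr : ‖lm • vv + zt - zp‖ ^ 2 + 2 * lm * ep ≤ σ ^ 2 * ‖zt - zp‖ ^ 2) :
    ‖zt - zs‖ * Real.sqrt (1 - σ ^ 2) ≤ ‖zp - zs‖ := by
  have h1σ : (0:ℝ) < 1 - σ ^ 2 := by nlinarith
  set ρ := Real.sqrt (1 - σ ^ 2) with hρ
  have hρ2 : ρ ^ 2 = 1 - σ ^ 2 := Real.sq_sqrt h1σ.le
  have hρ0 : 0 < ρ := Real.sqrt_pos.2 h1σ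
  set P : H := lm • vv with hP
  have hPe : lm • vv + zt - zp = P + (zt - zp) := by rw [hP]; abel
  rw [hPe] at herr
  have hle : (0:ℝ) ≤ lm * ep := mul_nonneg hl.le he
  -- expansions
  have e1 : ‖P + (zt - zp)‖ ^ 2 = ‖P‖ ^ 2 + 2 * ⟪P, zt - zp⟫ + ‖zt - zp‖ ^ 2 :=
    norm_add_sq_real _ _
  have e2 : ⟪P, zt - zp⟫ = ⟪P, zt - zs⟫ - ⟪P, zp - zs⟫ := by
    rw [← inner_sub_right]; congr 1; abel
  have e3 : ‖P - (zp - zs)‖ ^ 2 = ‖P‖ ^ 2 - 2 * ⟪P, zp - zs⟫ + ‖zp - zs‖ ^ 2 :=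
    norm_sub_sq_real _ _
  have hA : -(lm * ep) ≤ ⟪P, zt - zs⟫ := by
    rw [hP, real_inner_smul_left, real_inner_comm]
    calc -(lm*ep) = lm * (-ep) := by ring
    _ ≤ lm * ⟪zt - zs, vv⟫ := mul_le_mul_of_nonneg_left henl hl.le
  -- Key 1
  have key1 : ‖P - (zp - zs)‖ ^ 2 + (1 - σ ^ 2) * ‖zt - zp‖ ^ 2 ≤ ‖zp - zs‖ ^ 2 := by
    rw [e3]
    rw [e1, e2] at herr
    linarith
  -- Key 2
  have key2 : ‖P + (zt - zp)‖ ≤ σ * ‖zt - zp‖ := by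
    have h2 : ‖P + (zt - zp)‖ ^ 2 ≤ (σ * ‖zt - zp‖) ^ 2 := by
      rw [mul_pow]; linarith
    have h3 := Real.sqrt_le_sqrt h2
    rwa [Real.sqrt_sq (norm_nonneg _), Real.sqrt_sq (by positivity)] at h3
  -- triangle inequality
  have tri : ‖zt - zs‖ ≤ ‖P - (zp - zs)‖ + ‖P + (zt - zp)‖ := by
    have h0 : zt - zs = -(P - (zp - zs)) + (P + (zt - zp)) := by abel
    calc ‖zt - zs‖ = ‖-(P - (zp - zs)) + (P + (zt - zp))‖ := by rw [← h0]
    _ ≤ ‖-(P - (zp - zs))‖ + ‖P + (zt - zp)‖ := norm_add_le _ _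
    _ = ‖P - (zp - zs)‖ + ‖P + (zt - zp)‖ := by rw [norm_neg]
  -- arithmetic finish
  set b := ‖P - (zp - zs)‖ with hb
  set u := ‖zt - zp‖ with hu
  set E := ‖zp - zs‖ with hE
  have hb0 : 0 ≤ b := norm_nonneg _
  have hu0 : 0 ≤ u := norm_nonneg _
  have hE0 : 0 ≤ E := norm_nonneg _
  have hw : ‖zt - zs‖ ≤ b + σ * u := le_trans tri (by linarith)
  have hbe' : b ^ 2 ≤ E ^ 2 - ρ ^ 2 * u ^ 2 := by rw [hρ2]; linarith
  have hruE : ρ * u ≤ E := by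
    have hsq0 : (ρ * u) ^ 2 ≤ E ^ 2 := by nlinarith [sq_nonneg b]
    have h3 := Real.sqrt_le_sqrt hsq0
    rwa [Real.sqrt_sq (by positivity), Real.sqrt_sq hE0] at h3
  have hrhs : 0 ≤ E - ρ * σ * u := by
    nlinarith [mul_nonneg (sub_nonneg.2 hσ1.le) hE0, mul_le_mul_of_nonneg_left hruE hσ0]
  have h1 : ρ * b ≤ E - ρ * σ * u := by
    have hmul : ρ ^ 2 * b ^ 2 ≤ ρ ^ 2 * (E ^ 2 - ρ ^ 2 * u ^ 2) :=
      mul_le_mul_of_nonneg_left hbe' (sq_nonneg ρ)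
    have hid : ρ ^ 2 * σ ^ 2 * u ^ 2 + ρ ^ 2 * ρ ^ 2 * u ^ 2 - ρ ^ 2 * u ^ 2 = 0 := by
      linear_combination (ρ ^ 2 * u ^ 2) * hρ2
    have hid2 : (1 - ρ ^ 2 - σ ^ 2) * E ^ 2 = 0 := by
      linear_combination (-(E ^ 2)) * hρ2
    have hsq : (ρ * b) ^ 2 ≤ (E - ρ * σ * u) ^ 2 := by nlinarith [hmul, hid, hid2, sq_nonneg (σ * E - ρ * u)]
    have h3 := Real.sqrt_le_sqrt hsq
    rwa [Real.sqrt_sq (by positivity), Real.sqrt_sq hrhs] at h3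
  calc ‖zt - zs‖ * ρ ≤ (b + σ * u) * ρ := mul_le_mul_of_nonneg_right hw hρ0.le
  _ ≤ E := by nlinarith

set_option maxHeartbeats 1000000 in
/-- Theorem 3, error bound: if T⁻¹(0) ≠ ∅ and d₀ is the distance from z₀ to
T⁻¹(0), then `εₖᵃ ≤ 2d₀²/(Λₖ√(1-σ²))` for every k ≥ 1. -/
theorem stmt_11 {H : Type*} [NormedAddCommGroup H] [InnerProductSpace ℝ H] [CompleteSpace H]
    (T : Set (H × H)) (z ztilde v : ℕ → H) (eps lam t : ℕ → ℝ) (σ : ℝ)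
    (hσ0 : 0 ≤ σ) (hσ1 : σ < 1)
    (heps : ∀ k ≥ 1, 0 ≤ eps k) (hlam : ∀ k ≥ 1, 0 < lam k)
    (ht : ∀ k ≥ 1, 0 < t k ∧ t k ≤ 1)
    (henl : ∀ k ≥ 1, ∀ p ∈ T, ⟪ztilde k - p.1, v k - p.2⟫ ≥ -(eps k))
    (herr : ∀ k ≥ 1, ‖lam k • v k + ztilde k - z (k - 1)‖ ^ 2 + 2 * lam k * eps k ≤
      σ ^ 2 * ‖ztilde k - z (k - 1)‖ ^ 2)
    (hup : ∀ k ≥ 1, z k = z (k - 1) - (t k * lam k) • v k)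
    (Lam : ℕ → ℝ) (hLam : ∀ k, Lam k = ∑ i ∈ Finset.Icc 1 k, t i * lam i)
    (za va : ℕ → H) (ea : ℕ → ℝ)
    (hza : ∀ k, za k = (Lam k)⁻¹ • ∑ i ∈ Finset.Icc 1 k, (t i * lam i) • ztilde i)
    (hva : ∀ k, va k = (Lam k)⁻¹ • ∑ i ∈ Finset.Icc 1 k, (t i * lam i) • v i)
    (hea : ∀ k, ea k = (Lam k)⁻¹ *
      ∑ i ∈ Finset.Icc 1 k, t i * lam i * (eps i + ⟪ztilde i - za k, v i - va k⟫))
    (hsol : {x : H | (x, (0 : H)) ∈ T}.Nonempty)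
    (d0 : ℝ) (hd0 : d0 = Metric.infDist (z 0) {x : H | (x, (0 : H)) ∈ T}) :
    ∀ k ≥ 1, ea k ≤ 2 * d0 ^ 2 / (Lam k * Real.sqrt (1 - σ ^ 2)) := by
  intro k hk
  have h1σ : (0:ℝ) < 1 - σ ^ 2 := by nlinarith
  set ρ := Real.sqrt (1 - σ ^ 2) with hρ
  have hρ2 : ρ ^ 2 = 1 - σ ^ 2 := Real.sq_sqrt h1σ.le
  have hρ0 : 0 < ρ := Real.sqrt_pos.2 h1σ
  have hρ1 : ρ ≤ 1 := by
    rw [hρ]; exact Real.sqrt_le_one.2 (by nlinarith)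
  have hne : (Finset.Icc 1 k).Nonempty := Finset.nonempty_Icc.2 hk
  have hspos : ∀ i ∈ Finset.Icc 1 k, 0 < t i * lam i := fun i hi =>
    mul_pos (ht i (Finset.mem_Icc.1 hi).1).1 (hlam i (Finset.mem_Icc.1 hi).1)
  have hΛ : 0 < Lam k := by
    rw [hLam k]; exact Finset.sum_pos hspos hne
  -- telescoping key inequality
  have key : ∀ w : H,
      2 * ∑ i ∈ Finset.Icc 1 k, (t i * lam i) * (⟪v i, ztilde i - w⟫ + eps i) ≤
        ‖z 0 - w‖ ^ 2 - ‖z k - w‖ ^ 2 := by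
    intro w
    have tele : ∑ i ∈ Finset.Icc 1 k, (‖z (i - 1) - w‖ ^ 2 - ‖z i - w‖ ^ 2)
        = ‖z 0 - w‖ ^ 2 - ‖z k - w‖ ^ 2 := by
      rw [← Finset.Ico_add_one_right_eq_Icc, Finset.sum_Ico_eq_sum_range]
      have h1 : ∀ i, 1 + i - 1 = i := fun i => by omega
      have h2 : ∀ i, 1 + i = i + 1 := fun i => by omega
      have h3 : k + 1 - 1 = k := by omega
      simp only [h1, h2, h3]
      exact Finset.sum_range_sub' (fun i => ‖z i - w‖ ^ 2) k
    have hstep : ∀ i ∈ Finset.Icc 1 k,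
        2 * (t i * lam i) * (⟪v i, ztilde i - w⟫ + eps i)
          ≤ ‖z (i - 1) - w‖ ^ 2 - ‖z i - w‖ ^ 2 := by
      intro i hi
      obtain ⟨hi1, _⟩ := Finset.mem_Icc.1 hi
      have h := hpe_step (z (i - 1)) (ztilde i) (v i) w (lam i) (t i) (eps i) σ
        (hlam i hi1) (ht i hi1).1 (ht i hi1).2 (by nlinarith) (herr i hi1)
      rw [hup i hi1]
      exact h
    calc 2 * ∑ i ∈ Finset.Icc 1 k, (t i * lam i) * (⟪v i, ztilde i - w⟫ + eps i)
        = ∑ i ∈ Finset.Icc 1 k, 2 * (t i * lam i) * (⟪v i, ztilde i - w⟫ + eps i) := by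
          rw [Finset.mul_sum]; exact Finset.sum_congr rfl fun i _ => by ring
    _ ≤ ∑ i ∈ Finset.Icc 1 k, (‖z (i - 1) - w‖ ^ 2 - ‖z i - w‖ ^ 2) :=
          Finset.sum_le_sum hstep
    _ = ‖z 0 - w‖ ^ 2 - ‖z k - w‖ ^ 2 := tele
  -- scalar multiples of the averages
  have hza' : Lam k • za k = ∑ i ∈ Finset.Icc 1 k, (t i * lam i) • ztilde i := by
    rw [hza k, smul_smul, mul_inv_cancel₀ hΛ.ne', one_smul]
  -- per-solution estimate
  have main : ∀ zs ∈ {x : H | (x, (0 : H)) ∈ T}, ea k * (Lam k * ρ) ≤ 2 * ‖z 0 - zs‖ ^ 2 := by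
    intro zs hzs
    have henl' : ∀ i ≥ 1, ⟪ztilde i - zs, v i⟫ ≥ -(eps i) := by
      intro i hi
      have h := henl i hi (zs, (0 : H)) hzs
      simpa using h
    -- Fejér monotonicity
    have fej : ∀ i, ‖z i - zs‖ ≤ ‖z 0 - zs‖ := by
      intro i
      induction i with
      | zero => exact le_refl _
      | succ n ih =>
        have hi1 : n + 1 ≥ 1 := Nat.succ_le_succ (Nat.zero_le n)
        have herr' := herr (n + 1) hi1
        have hup' := hup (n + 1) hi1
        simp only [Nat.add_sub_cancel] at herr' hup'
        have h := hpe_step (z n) (ztilde (n + 1)) (v (n + 1)) zs (lam (n + 1))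
          (t (n + 1)) (eps (n + 1)) σ (hlam _ hi1) (ht _ hi1).1 (ht _ hi1).2
          (by nlinarith) herr'
        rw [← hup'] at h
        have hin : 0 ≤ ⟪v (n + 1), ztilde (n + 1) - zs⟫ + eps (n + 1) := by
          have := henl' (n + 1) hi1
          rw [real_inner_comm]; linarith
        have hs : 0 < t (n + 1) * lam (n + 1) := mul_pos (ht _ hi1).1 (hlam _ hi1)
        have hsq : ‖z (n + 1) - zs‖ ^ 2 ≤ ‖z n - zs‖ ^ 2 := by nlinarith
        have h3 := Real.sqrt_le_sqrt hsq
        rw [Real.sqrt_sq (norm_nonneg _), Real.sqrt_sq (norm_nonneg _)] at h3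
        exact h3.trans ih
    -- bound on the averaged extragradient point
    have htil : ∀ i ∈ Finset.Icc 1 k, ‖ztilde i - zs‖ ≤ ‖z 0 - zs‖ / ρ := by
      intro i hi
      obtain ⟨hi1, _⟩ := Finset.mem_Icc.1 hi
      have h := hpe_tilde (z (i - 1)) (ztilde i) (v i) zs (lam i) (eps i) σ
        (hlam i hi1) (heps i hi1) hσ0 hσ1 (henl' i hi1) (herr i hi1)
      rw [le_div_iff₀ hρ0]
      exact h.trans (fej (i - 1))
    have hca : ‖za k - zs‖ * ρ ≤ ‖z 0 - zs‖ := by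
      have hlc : Lam k • (za k - zs) = ∑ i ∈ Finset.Icc 1 k, (t i * lam i) • (ztilde i - zs) := by
        rw [smul_sub, hza']
        rw [Finset.sum_congr rfl (fun i _ => smul_sub (t i * lam i) (ztilde i) zs),
          Finset.sum_sub_distrib, ← Finset.sum_smul, ← hLam k]
      have hnorm : Lam k * ‖za k - zs‖ ≤ Lam k * (‖z 0 - zs‖ / ρ) := by
        calc Lam k * ‖za k - zs‖ = ‖Lam k • (za k - zs)‖ := by
              rw [norm_smul, Real.norm_eq_abs, abs_of_pos hΛ]
        _ = ‖∑ i ∈ Finset.Icc 1 k, (t i * lam i) • (ztilde i - zs)‖ := by rw [hlc]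
        _ ≤ ∑ i ∈ Finset.Icc 1 k, ‖(t i * lam i) • (ztilde i - zs)‖ := norm_sum_le _ _
        _ = ∑ i ∈ Finset.Icc 1 k, (t i * lam i) * ‖ztilde i - zs‖ := by
              refine Finset.sum_congr rfl fun i hi => ?_
              rw [norm_smul, Real.norm_eq_abs, abs_of_pos (hspos i hi)]
        _ ≤ ∑ i ∈ Finset.Icc 1 k, (t i * lam i) * (‖z 0 - zs‖ / ρ) :=
              Finset.sum_le_sum fun i hi =>
                mul_le_mul_of_nonneg_left (htil i hi) (hspos i hi).le
        _ = Lam k * (‖z 0 - zs‖ / ρ) := by rw [← Finset.sum_mul, ← hLam k]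
      have h4 := le_of_mul_le_mul_left (by linarith : Lam k * ‖za k - zs‖ ≤ Lam k * (‖z 0 - zs‖ / ρ)) hΛ
      calc ‖za k - zs‖ * ρ ≤ (‖z 0 - zs‖ / ρ) * ρ := mul_le_mul_of_nonneg_right h4 hρ0.le
      _ = ‖z 0 - zs‖ := div_mul_cancel₀ _ hρ0.ne'
    -- identity for the ergodic error
    have orth : ∑ i ∈ Finset.Icc 1 k, (t i * lam i) * ⟪ztilde i - za k, va k⟫ = 0 := by
      have h5 : ∑ i ∈ Finset.Icc 1 k, (t i * lam i) * ⟪ztilde i - za k, va k⟫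
          = ⟪∑ i ∈ Finset.Icc 1 k, (t i * lam i) • (ztilde i - za k), va k⟫ := by
        rw [sum_inner]
        exact Finset.sum_congr rfl fun i _ => (real_inner_smul_left _ _ _).symm
      have h6 : ∑ i ∈ Finset.Icc 1 k, (t i * lam i) • (ztilde i - za k) = 0 := by
        rw [Finset.sum_congr rfl (fun i _ => smul_sub (t i * lam i) (ztilde i) (za k)),
          Finset.sum_sub_distrib, ← Finset.sum_smul, ← hLam k, hza', sub_self]
      rw [h5, h6, inner_zero_left]
    have hea' : Lam k * ea k
        = ∑ i ∈ Finset.Icc 1 k, (t i * lam i) * (eps i + ⟪ztilde i - za k, v i⟫) := by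
      rw [hea k, ← mul_assoc, mul_inv_cancel₀ hΛ.ne', one_mul]
      have hsplit : ∀ i ∈ Finset.Icc 1 k,
          t i * lam i * (eps i + ⟪ztilde i - za k, v i - va k⟫)
            = t i * lam i * (eps i + ⟪ztilde i - za k, v i⟫)
              - t i * lam i * ⟪ztilde i - za k, va k⟫ := by
        intro i _
        rw [inner_sub_right]; ring
      rw [Finset.sum_congr rfl hsplit, Finset.sum_sub_distrib, orth, sub_zero]
    -- apply the key inequality at w = za k
    have h2e : 2 * (Lam k * ea k) ≤ ‖z 0 - za k‖ ^ 2 - ‖z k - za k‖ ^ 2 := by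
      rw [hea']
      refine le_trans (le_of_eq ?_) (key (za k))
      congr 1
      exact Finset.sum_congr rfl fun i _ => by rw [real_inner_comm]; ring
    -- expand the anchor change
    have hAeq : ‖z 0 - za k‖ ^ 2 - ‖z k - za k‖ ^ 2
        = ‖z 0 - zs‖ ^ 2 - ‖z k - zs‖ ^ 2 + 2 * ⟪(z k - zs) - (z 0 - zs), za k - zs⟫ := by
      have d1 : z 0 - za k = (z 0 - zs) - (za k - zs) := by abel
      have d2 : z k - za k = (z k - zs) - (za k - zs) := by abel
      have n1 : ‖(z 0 - zs) - (za k - zs)‖ ^ 2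
          = ‖z 0 - zs‖ ^ 2 - 2 * ⟪z 0 - zs, za k - zs⟫ + ‖za k - zs‖ ^ 2 :=
        norm_sub_sq_real _ _
      have n2 : ‖(z k - zs) - (za k - zs)‖ ^ 2
          = ‖z k - zs‖ ^ 2 - 2 * ⟪z k - zs, za k - zs⟫ + ‖za k - zs‖ ^ 2 :=
        norm_sub_sq_real _ _
      have n3 : ⟪(z k - zs) - (z 0 - zs), za k - zs⟫
          = ⟪z k - zs, za k - zs⟫ - ⟪z 0 - zs, za k - zs⟫ := inner_sub_left _ _ _
      rw [d1, d2, n1, n2, n3]; ring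
    have hip : ⟪(z k - zs) - (z 0 - zs), za k - zs⟫ ≤ (‖z k - zs‖ + ‖z 0 - zs‖) * ‖za k - zs‖ :=
      le_trans (real_inner_le_norm _ _)
        (mul_le_mul_of_nonneg_right (norm_sub_le _ _) (norm_nonneg _))
    have hmE : ‖z k - zs‖ ≤ ‖z 0 - zs‖ := fej k
    have h3 : 2 * (Lam k * ea k) ≤ ‖z 0 - zs‖ ^ 2 - ‖z k - zs‖ ^ 2
        + 2 * ((‖z k - zs‖ + ‖z 0 - zs‖) * ‖za k - zs‖) := by
      rw [hAeq] at h2e; linarith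
    set E := ‖z 0 - zs‖ with hEdef
    set m := ‖z k - zs‖ with hmdef
    set C := ‖za k - zs‖ with hCdef
    have hE0 : 0 ≤ E := norm_nonneg _
    have hm0 : 0 ≤ m := norm_nonneg _
    have hC0 : 0 ≤ C := norm_nonneg _
    nlinarith [mul_le_mul_of_nonneg_left h3 hρ0.le,
      mul_nonneg (sub_nonneg.2 hρ1) (mul_nonneg (sub_nonneg.2 hmE) (add_nonneg hm0 hE0)),
      sq_nonneg (E - m),
      mul_nonneg (add_nonneg hm0 hE0) (sub_nonneg.2 hca)]
  -- conclude via the infimum of distances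
  rw [le_div_iff₀ (by positivity)]
  by_cases hpos : 0 < ea k * (Lam k * ρ)
  · set c := ea k * (Lam k * ρ) with hc
    have hsq : Real.sqrt (c / 2) ≤ d0 := by
      rw [hd0]
      refine le_of_not_gt fun hlt => ?_
      obtain ⟨y, hy, hdy⟩ := (Metric.infDist_lt_iff hsol).1 hlt
      have h7 := main y hy
      rw [dist_eq_norm] at hdy
      have h8 : c / 2 ≤ ‖z 0 - y‖ ^ 2 := by linarith
      have h9 := Real.sqrt_le_sqrt h8
      rw [Real.sqrt_sq (norm_nonneg _)] at h9
      linarith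
    have h10 : (Real.sqrt (c / 2)) ^ 2 ≤ d0 ^ 2 :=
      pow_le_pow_left₀ (Real.sqrt_nonneg _) hsq 2
    rw [Real.sq_sqrt (by linarith : (0:ℝ) ≤ c / 2)] at h10
    linarith
  · push_neg at hpos
    have hd0nn : 0 ≤ d0 := by rw [hd0]; exact Metric.infDist_nonneg
    nlinarith
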